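/- Let σ ∈ S_6 have cycle type (3,3) (two disjoint 3-cycles and no fixed points), and let a ∈ (ℤ/2)^6. Let H be either W_6 or the subgroup K_6 ⋊ S_6, and suppose (a,σ) ∈ H. Then the conjugacy class of (a,σ) in H is of type D. -/

import Mathlib

/-- The action of a permutation `σ ∈ S_n` on a vector `a ∈ (ℤ/2)^n`:
`(σ · a)_i = a_{σ⁻¹ i}`. -/
def permAct {n : ℕ} (σ : Equiv.Perm (Fin n)) (a : Fin n → ZMod 2) : Fin n → ZMod 2 :=
  fun i => a (σ⁻¹ i)

/-- The underlying set of the hyperoctahedral group `W n = (ℤ/2)^n ⋊ S_n`. -/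
@[ext]
structure W (n : ℕ) where
  vec : Fin n → ZMod 2
  perm : Equiv.Perm (Fin n)

/-- Group structure of `W n`: `(a,σ)(b,μ) = (a + σ·b, σμ)`. -/
instance (n : ℕ) : Group (W n) where
  mul x y := ⟨x.vec + permAct x.perm y.vec, x.perm * y.perm⟩
  one := ⟨0, 1⟩
  inv x := ⟨permAct x.perm⁻¹ (-x.vec), x.perm⁻¹⟩
  mul_assoc x y z := by
    refine W.ext ?_ ?_
    · show (x.vec + permAct x.perm y.vec) + permAct (x.perm * y.perm) z.vec
        = x.vec + permAct x.perm (y.vec + permAct y.perm z.vec)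
      funext i
      simp [permAct, mul_inv_rev, Equiv.Perm.mul_apply, add_assoc]
    · exact mul_assoc _ _ _
  one_mul x := by
    refine W.ext ?_ ?_
    · show (0 : Fin n → ZMod 2) + permAct 1 x.vec = x.vec
      funext i; simp [permAct]
    · exact one_mul _
  mul_one x := by
    refine W.ext ?_ ?_
    · show x.vec + permAct x.perm 0 = x.vec
      funext i; simp [permAct]
    · exact mul_one _
  inv_mul_cancel x := by
    refine W.ext ?_ ?_
    · show permAct x.perm⁻¹ (-x.vec) + permAct x.perm⁻¹ x.vec = 0
      funext i; simp [permAct]; exact CharTwo.add_self_eq_zero _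
    · exact inv_mul_cancel _

@[simp] theorem W.mul_vec {n : ℕ} (x y : W n) :
    (x * y).vec = x.vec + permAct x.perm y.vec := rfl
@[simp] theorem W.mul_perm {n : ℕ} (x y : W n) :
    (x * y).perm = x.perm * y.perm := rfl
@[simp] theorem W.one_vec {n : ℕ} : (1 : W n).vec = 0 := rfl
@[simp] theorem W.one_perm {n : ℕ} : (1 : W n).perm = 1 := rfl
@[simp] theorem W.inv_vec {n : ℕ} (x : W n) :
    (x⁻¹).vec = permAct x.perm⁻¹ (-x.vec) := rfl
@[simp] theorem W.inv_perm {n : ℕ} (x : W n) : (x⁻¹).perm = x.perm⁻¹ := rfl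

/-- Conjugation `x ▷ y = x y x⁻¹` in a group. -/
def conjAct' {G : Type*} [Group G] (x y : G) : G := x * y * x⁻¹

/-- `sq(x,y) = x ▷ (y ▷ (x ▷ y))`. -/
def sqD {G : Type*} [Group G] (x y : G) : G := conjAct' x (conjAct' y (conjAct' x y))

/-- Conjugacy class of `x` in the group `G`. -/
def conjClass {G : Type*} [Group G] (x : G) : Set G := {y | ∃ t : G, y = t * x * t⁻¹}

/-- A subset `O` of a group is of type D. -/
def IsTypeD {G : Type*} [Group G] (O : Set G) : Prop :=
  ∃ R S : Set G, R ⊆ O ∧ S ⊆ O ∧ R.Nonempty ∧ S.Nonempty ∧ Disjoint R S ∧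
    (∀ r ∈ R, ∀ r' ∈ R, conjAct' r r' ∈ R) ∧
    (∀ s ∈ S, ∀ s' ∈ S, conjAct' s s' ∈ S) ∧
    (∀ r ∈ R, ∀ s ∈ S, conjAct' r s ∈ S ∧ conjAct' s r ∈ R) ∧
    (∃ a ∈ R, ∃ b ∈ S, sqD a b ≠ b)

/-- The subgroup `K_n ⋊ S_n` of `W n`, where `K_n = {a : a_1 + ⋯ + a_n = 0}`. -/
def Ksub (n : ℕ) : Subgroup (W n) where
  carrier := {x | ∑ i, x.vec i = 0}
  one_mem' := by simp
  mul_mem' := by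
    intro x y hx hy
    simp only [Set.mem_setOf_eq] at *
    rw [W.mul_vec]
    simp only [Pi.add_apply, Finset.sum_add_distrib, hx, zero_add, permAct]
    rw [Equiv.sum_comp x.perm⁻¹ y.vec]
    exact hy
  inv_mem' := by
    intro x hx
    simp only [Set.mem_setOf_eq] at *
    rw [W.inv_vec]
    simp only [permAct, inv_inv, Pi.neg_apply]
    rw [Finset.sum_neg_distrib, Equiv.sum_comp x.perm x.vec, hx, neg_zero]

/-!
Conjugating within `H` moves the permutation part `σ` to any permutation of type `(3,3)`, in
particular to `ρ` and `β`, which agree on `{0,1,2}` and are mutually inverse 3-cycles on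
`{3,4,5}`; they commute and differ. Take `R` and `S` to be the elements of the class lying over
`ρ` and over `β`: since `ρ` and `β` commute, `▷` preserves these fibres as type D requires.
For `r = (u,ρ)` and `s = (v,β)`, `sq(r,s) = s` means `(rs)² = (sr)²`, i.e. that
`u + ρv + v + βu` is fixed by `ρβ`. Conjugating `r` by `(γ,1)` with `γ ∈ K_6` changes this vector
by one that `ρβ` does not fix, so for one of the two choices of `r` we get `sq(r,s) ≠ s`.
-/

open Equiv Equiv.Perm

theorem map_conjAct' {G P : Type*} [Group G] [Group P] (f : G →* P) (x y : G) :
    f (conjAct' x y) = conjAct' (f x) (f y) := by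
  simp [conjAct']

theorem sqD_eq_self_iff {G : Type*} [Group G] (x y : G) :
    sqD x y = y ↔ x * y * (x * y) = y * x * (y * x) := by
  have hsq : sqD x y = x * y * (x * y) * (y * x * (y * x))⁻¹ * y := by
    simp only [sqD, conjAct']; group
  rw [hsq, mul_eq_right, mul_inv_eq_one]

theorem conjAct'_mem_conjClass {G : Type*} [Group G] {x z : G} (y : G) (hz : z ∈ conjClass x) :
    conjAct' y z ∈ conjClass x := by
  obtain ⟨t, rfl⟩ := hz
  exact ⟨y * t, by simp only [conjAct', mul_inv_rev, mul_assoc]⟩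

/-- `R` and `S` are the fibres of `f` through `a` and `b` inside `O`. -/
theorem isTypeD_of_commute {G P : Type*} [Group G] [Group P] {O : Set G}
    (hO : ∀ x ∈ O, ∀ y ∈ O, conjAct' x y ∈ O) (f : G →* P) {a b : G} (ha : a ∈ O) (hb : b ∈ O)
    (hab : Commute (f a) (f b)) (hne : f a ≠ f b) (hsq : sqD a b ≠ b) : IsTypeD O := by
  have hfib : ∀ x y : G, f x = f a ∨ f x = f b → f y = f a ∨ f y = f b →
      f (conjAct' x y) = f y := by
    intro x y hx hy
    have hxy : Commute (f x) (f y) := by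
      rcases hx with hx | hx <;> rcases hy with hy | hy <;> rw [hx, hy]
      exacts [hab, hab.symm]
    rw [map_conjAct', conjAct', hxy.eq, mul_inv_cancel_right]
  refine ⟨{r | r ∈ O ∧ f r = f a}, {s | s ∈ O ∧ f s = f b}, fun _ h => h.1, fun _ h => h.1,
    ⟨a, ha, rfl⟩, ⟨b, hb, rfl⟩, Set.disjoint_left.mpr fun x hR hS => hne (hR.2.symm.trans hS.2),
    ?_, ?_, ?_, ⟨a, ⟨ha, rfl⟩, b, ⟨hb, rfl⟩, hsq⟩⟩
  · exact fun r hr r' hr' => ⟨hO r hr.1 r' hr'.1, (hfib r r' (.inl hr.2) (.inl hr'.2)).trans hr'.2⟩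
  · exact fun s hs s' hs' => ⟨hO s hs.1 s' hs'.1, (hfib s s' (.inr hs.2) (.inr hs'.2)).trans hs'.2⟩
  · exact fun r hr s hs =>
      ⟨⟨hO r hr.1 s hs.1, (hfib r s (.inl hr.2) (.inr hs.2)).trans hs.2⟩,
        ⟨hO s hs.1 r hr.1, (hfib s r (.inr hs.2) (.inl hr.2)).trans hr.2⟩⟩

theorem cycleType_mul_of_isThreeCycle {α : Type*} [Fintype α] [DecidableEq α] {g h : Perm α}
    (hg : g.IsThreeCycle) (hh : h.IsThreeCycle) (hd : g.Disjoint h) :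
    (g * h).cycleType = {3, 3} := by
  rw [hd.cycleType_mul, hg.cycleType, hh.cycleType]
  rfl

section permAct

variable {n : ℕ}

@[simp] theorem permAct_zero (σ : Perm (Fin n)) : permAct σ 0 = 0 := rfl

theorem permAct_add (σ : Perm (Fin n)) (a b : Fin n → ZMod 2) :
    permAct σ (a + b) = permAct σ a + permAct σ b := rfl

theorem add_permAct_eq_add_permAct_iff (σ : Perm (Fin n)) (a b : Fin n → ZMod 2) :
    a + permAct σ a = b + permAct σ b ↔ permAct σ (a + b) = a + b := by
  have hZ2 : ∀ x y z w : ZMod 2, x + y = z + w ↔ y + w = x + z := by decide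
  simp only [funext_iff, Pi.add_apply, permAct]
  exact forall_congr' fun i => hZ2 _ _ _ _

end permAct

namespace W

variable {n : ℕ}

def permHom : W n →* Perm (Fin n) where
  toFun := perm
  map_one' := rfl
  map_mul' _ _ := rfl

theorem conj_mk (c : Fin n → ZMod 2) (τ : Perm (Fin n)) (x : W n) :
    mk c τ * x * (mk c τ)⁻¹
      = mk (c + permAct τ x.vec + permAct (τ * x.perm * τ⁻¹) c) (τ * x.perm * τ⁻¹) := by
  refine W.ext ?_ rfl
  funext i
  simp [permAct, mul_inv_rev, Perm.mul_apply, CharTwo.neg_eq]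

theorem exists_mem_conjClass {H : Subgroup (W n)} {x : W n} (hx : x ∈ H) {c : Fin n → ZMod 2}
    {τ : Perm (Fin n)} (hc : mk c τ ∈ H) :
    ∃ y ∈ conjClass (⟨x, hx⟩ : H),
      (y : W n) = mk (c + permAct τ x.vec + permAct (τ * x.perm * τ⁻¹) c) (τ * x.perm * τ⁻¹) :=
  ⟨⟨mk c τ, hc⟩ * ⟨x, hx⟩ * ⟨mk c τ, hc⟩⁻¹, ⟨_, rfl⟩, conj_mk c τ x⟩

/-- With commuting permutation parts, `sq(x, y) = y` says `(xy)² = (yx)²`, which in the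
vector coordinate is a fixed-point condition for `ρβ`. -/
theorem sqD_mk_eq_self_iff {ρ β : Perm (Fin n)} (h : Commute ρ β) (u v : Fin n → ZMod 2) :
    sqD (mk u ρ) (mk v β) = mk v β ↔
      permAct (ρ * β) (u + permAct ρ v + (v + permAct β u))
        = u + permAct ρ v + (v + permAct β u) := by
  rw [sqD_eq_self_iff, W.ext_iff]
  simp only [mul_vec, mul_perm, ← h.eq, and_true, ← add_permAct_eq_add_permAct_iff]

/-- Replacing `u` by `u + δ` adds `δ + β δ` to the vector whose fixedness decides `sq = id`. -/
theorem sqD_mk_ne_or_sqD_mk_add_ne {ρ β : Perm (Fin n)} (h : Commute ρ β) {δ : Fin n → ZMod 2}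
    (hδ : permAct (ρ * β) (δ + permAct β δ) ≠ δ + permAct β δ) (u v : Fin n → ZMod 2) :
    sqD (mk u ρ) (mk v β) ≠ mk v β ∨ sqD (mk (u + δ) ρ) (mk v β) ≠ mk v β := by
  by_contra! hboth
  obtain ⟨h₀, h₁⟩ := hboth
  rw [sqD_mk_eq_self_iff h] at h₀ h₁
  apply hδ
  have hsplit : u + δ + permAct ρ v + (v + permAct β (u + δ))
      = u + permAct ρ v + (v + permAct β u) + (δ + permAct β δ) := by
    rw [permAct_add]; abel
  rw [hsplit, permAct_add, h₀] at h₁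
  exact add_left_cancel h₁

theorem exists_conjClass_sqD_ne {H : Subgroup (W n)} {x : W n} (hx : x ∈ H)
    {ρ β τ₁ τ₂ : Perm (Fin n)} {γ δ : Fin n → ZMod 2} (hρβ : Commute ρ β)
    (hτ₁ : τ₁ * x.perm * τ₁⁻¹ = ρ) (hτ₂ : τ₂ * x.perm * τ₂⁻¹ = β)
    (h₁ : mk 0 τ₁ ∈ H) (hγ : mk γ τ₁ ∈ H) (h₂ : mk 0 τ₂ ∈ H) (hγδ : γ + permAct ρ γ = δ)
    (hδ : permAct (ρ * β) (δ + permAct β δ) ≠ δ + permAct β δ) :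
    ∃ r ∈ conjClass (⟨x, hx⟩ : H), ∃ s ∈ conjClass (⟨x, hx⟩ : H),
      (r : W n).perm = ρ ∧ (s : W n).perm = β ∧ sqD (r : W n) s ≠ s := by
  obtain ⟨r₀, hr₀, hr₀v⟩ := exists_mem_conjClass hx h₁
  obtain ⟨r₁, hr₁, hr₁v⟩ := exists_mem_conjClass hx hγ
  obtain ⟨s, hs, hsv⟩ := exists_mem_conjClass hx h₂
  rw [hτ₁] at hr₀v hr₁v
  rw [hτ₂] at hsv
  simp only [zero_add, add_zero, permAct_zero] at hr₀v hsv
  have hr₁v' : (r₁ : W n) = mk (permAct τ₁ x.vec + δ) ρ := by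
    rw [hr₁v, ← hγδ]
    congr 1
    abel
  rcases sqD_mk_ne_or_sqD_mk_add_ne hρβ hδ (permAct τ₁ x.vec) (permAct τ₂ x.vec) with h | h
  · exact ⟨r₀, hr₀, s, hs, by rw [hr₀v], by rw [hsv], by rwa [hr₀v, hsv]⟩
  · exact ⟨r₁, hr₁, s, hs, by rw [hr₁v'], by rw [hsv], by rwa [hr₁v', hsv]⟩

end W

def ρ₃₃ : Perm (Fin 6) := swap 0 1 * swap 0 2 * (swap 3 4 * swap 3 5)

def β₃₃ : Perm (Fin 6) := swap 0 1 * swap 0 2 * (swap 3 5 * swap 3 4)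

def γ₃₃ : Fin 6 → ZMod 2 := ![1, 0, 0, 1, 0, 0]

def δ₃₃ : Fin 6 → ZMod 2 := γ₃₃ + permAct ρ₃₃ γ₃₃

theorem ρ₃₃_cycleType : ρ₃₃.cycleType = {3, 3} :=
  cycleType_mul_of_isThreeCycle
    (isThreeCycle_swap_mul_swap_same (by decide) (by decide) (by decide))
    (isThreeCycle_swap_mul_swap_same (by decide) (by decide) (by decide))
    (fun x => by fin_cases x <;> decide)

theorem β₃₃_cycleType : β₃₃.cycleType = {3, 3} :=
  cycleType_mul_of_isThreeCycle
    (isThreeCycle_swap_mul_swap_same (by decide) (by decide) (by decide))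
    (isThreeCycle_swap_mul_swap_same (by decide) (by decide) (by decide))
    (fun x => by fin_cases x <;> decide)

theorem ρ₃₃_commute_β₃₃ : Commute ρ₃₃ β₃₃ := by
  unfold Commute SemiconjBy; decide

theorem ρ₃₃_ne_β₃₃ : ρ₃₃ ≠ β₃₃ := by decide

theorem sum_γ₃₃ : ∑ i, γ₃₃ i = 0 := by decide

theorem permAct_δ₃₃_ne : permAct (ρ₃₃ * β₃₃) (δ₃₃ + permAct β₃₃ δ₃₃) ≠ δ₃₃ + permAct β₃₃ δ₃₃ := by
  decide

/-- for `σ ∈ S_6` of cycle type `(3,3)`, the conjugacy class of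
`(a,σ)` in `H` (where `H` is `W 6` or `K_6 ⋊ S_6`) is of type D. -/
theorem typeD_33 (σ : Equiv.Perm (Fin 6)) (hσ : σ.cycleType = {3, 3})
    (a : Fin 6 → ZMod 2)
    (H : Subgroup (W 6)) (hH : H = ⊤ ∨ H = Ksub 6)
    (hw : W.mk a σ ∈ H) :
    IsTypeD (conjClass (⟨W.mk a σ, hw⟩ : H)) := by
  obtain ⟨τ₁, hτ₁⟩ := isConj_iff.mp (isConj_of_cycleType_eq (hσ.trans ρ₃₃_cycleType.symm))
  obtain ⟨τ₂, hτ₂⟩ := isConj_iff.mp (isConj_of_cycleType_eq (hσ.trans β₃₃_cycleType.symm))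
  have hmem : ∀ c τ, ∑ i, c i = 0 → W.mk c τ ∈ H := by
    rcases hH with rfl | rfl
    exacts [fun _ _ _ => Subgroup.mem_top _, fun _ _ hc => hc]
  obtain ⟨r, hr, s, hs, hrρ, hsβ, hsq⟩ := W.exists_conjClass_sqD_ne hw ρ₃₃_commute_β₃₃ hτ₁ hτ₂
    (hmem 0 τ₁ (by simp)) (hmem γ₃₃ τ₁ sum_γ₃₃) (hmem 0 τ₂ (by simp)) rfl permAct_δ₃₃_ne
  refine isTypeD_of_commute (fun y _ z hz => conjAct'_mem_conjClass y hz) (W.permHom.comp H.subtype)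
    hr hs ?_ ?_ fun h => hsq (congrArg Subtype.val h)
  · change Commute (r : W 6).perm (s : W 6).perm
    rw [hrρ, hsβ]
    exact ρ₃₃_commute_β₃₃
  · change (r : W 6).perm ≠ (s : W 6).perm
    rw [hrρ, hsβ]
    exact ρ₃₃_ne_β₃₃
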